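/- The subspace L is invariant under each Long–Moody matrix S_i: S_i(L) ⊆ L for all 1 ≤ i ≤ n−1. -/

import Mathlib

open Matrix

namespace KLM

variable {k : Type*} [Field k]

/-- Assemble an `Nn × Nn` matrix from an `n × n` array of `N × N` blocks,
blocks being indexed by natural numbers (only indices `< n` are relevant). -/
def blk (n N : ℕ) (B : ℕ → ℕ → Matrix (Fin N) (Fin N) k) :
    Matrix (Fin n × Fin N) (Fin n × Fin N) k :=
  Matrix.of fun p q => B p.1.1 q.1.1 p.2 q.2

/-- The Dettweiler–Reiter convolution matrix `G_j = ρ^{DR}_λ(x_j)` (0-based index `j`):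
the identity except that the `j`-th block row is
`(λ(g_0−1), …, λ(g_{j−1}−1), λ g_j, g_{j+1}−1, …, g_{n−1}−1)`. -/
def G (n N : ℕ) (g : ℕ → Matrix (Fin N) (Fin N) k) (lam : k) (j : ℕ) :
    Matrix (Fin n × Fin N) (Fin n × Fin N) k :=
  blk n N fun r c =>
    if r = j then
      (if c < j then lam • (g c - 1) else if c = j then lam • g j else g c - 1)
    else if r = c then 1 else 0

/-- The Long–Moody matrix `S_i = ρ^{LM}(σ_i)` (0-based index `i`):
`(s_i ⊕ ⋯ ⊕ s_i) · diag(1, …, 1, R_i, 1, …, 1)` where `R_i` is the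
`2×2` block matrix with rows `(0, g_i)` and `(1, 1 − g_{i+1})`
placed in block rows/columns `i, i+1`. -/
def S (n N : ℕ) (g s : ℕ → Matrix (Fin N) (Fin N) k) (i : ℕ) :
    Matrix (Fin n × Fin N) (Fin n × Fin N) k :=
  blk n N fun r c =>
    if r = i ∧ c = i then 0
    else if r = i ∧ c = i + 1 then s i * g i
    else if r = i + 1 ∧ c = i then s i
    else if r = i + 1 ∧ c = i + 1 then s i * (1 - g (i + 1))
    else if r = c then s i
    else 0

/-- `K = {(w_1,…,w_n) : g_j w_j = w_j for all j}` (blockwise fixed vectors). -/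
def Kset (n N : ℕ) (g : ℕ → Matrix (Fin N) (Fin N) k) : Set ((Fin n × Fin N) → k) :=
  {w | ∀ j : Fin n, (g (j : ℕ)).mulVec (fun a => w (j, a)) = fun a => w (j, a)}

/-- The ordered product `G_1 G_2 ⋯ G_n`. -/
def Gprod (n N : ℕ) (g : ℕ → Matrix (Fin N) (Fin N) k) (lam : k) :
    Matrix (Fin n × Fin N) (Fin n × Fin N) k :=
  ((List.finRange n).map fun j => G n N g lam (j : ℕ)).prod

/-- `L = ker (G_1 G_2 ⋯ G_n − 1)`. -/
def Lset (n N : ℕ) (g : ℕ → Matrix (Fin N) (Fin N) k) (lam : k) :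
    Set ((Fin n × Fin N) → k) :=
  {x | (Gprod n N g lam - 1).mulVec x = 0}

set_option maxRecDepth 4000

/-! ### ring identities -/

section keys
variable {R : Type*} [Ring R] (σ a b x : R)

lemma k1 (h1 : σ * a = b * σ) : σ * (a - 1) = (b - 1) * σ := by
  simp only [mul_sub, sub_mul, mul_one, one_mul, h1]

lemma k2 (h1 : σ * a = b * σ) (h2 : b * σ * b = a * b * σ) :
    σ * (b - 1) = (a - 1) * (σ * a) + (b - 1) * (σ * (1 - b)) := by
  have h2' : b * (σ * b) = a * (b * σ) := by
    simpa only [mul_assoc] using h2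
  simp only [mul_sub, sub_mul, mul_one, one_mul, mul_add, add_mul, mul_assoc, h1]
  rw [← h2']
  abel

lemma k3 (h1 : σ * a = b * σ) (h3 : σ * x = x * σ) :
    (σ * a) * (x - 1) = (b * (x - 1)) * σ := by
  simp only [mul_sub, sub_mul, mul_one, one_mul, mul_assoc, h1, h3]

lemma k4 (h1 : σ * a = b * σ) : (σ * a) * (a - 1) = (b * b - b) * σ := by
  simp only [mul_sub, sub_mul, mul_one, one_mul, mul_assoc, h1]

lemma k5 (h1 : σ * a = b * σ) (h2 : b * σ * b = a * b * σ) :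
    (σ * a) * b = (b * a - b + 1) * (σ * a) + (b * b - b) * (σ * (1 - b)) := by
  have h2' : b * (σ * b) = a * (b * σ) := by simpa only [mul_assoc] using h2
  simp only [mul_sub, sub_mul, mul_one, one_mul, mul_add, add_mul, mul_assoc, h1]
  rw [← h2']
  abel

lemma k6 (h3 : σ * x = x * σ) :
    σ * (b * (x - 1)) + (σ * (1 - b)) * (x - 1) = (x - 1) * σ := by
  simp only [mul_sub, sub_mul, mul_one, one_mul, mul_assoc, h3]
  abel

lemma k7 (h1 : σ * a = b * σ) :
    σ * (b * a - b + 1) + (σ * (1 - b)) * (a - 1) = b * σ := by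
  simp only [mul_sub, sub_mul, mul_add, add_mul, mul_one, one_mul, mul_assoc, h1]
  abel

lemma k8 (h1 : σ * a = b * σ) (h2 : b * σ * b = a * b * σ) :
    σ * (b * b - b) + (σ * (1 - b)) * b = (a - 1) * (σ * a) + b * (σ * (1 - b)) := by
  have h2' : b * (σ * b) = a * (b * σ) := by simpa only [mul_assoc] using h2
  simp only [mul_sub, sub_mul, mul_one, one_mul, mul_add, add_mul, mul_assoc, h1]
  rw [← h2']
  abel

end keys

/-! ### block machinery -/

section blocks

variable (n N : ℕ) (g s : ℕ → Matrix (Fin N) (Fin N) k) (lam : k)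

lemma blk_apply (B : ℕ → ℕ → Matrix (Fin N) (Fin N) k)
    (p q : Fin n × Fin N) : blk n N B p q = B p.1.1 q.1.1 p.2 q.2 := rfl

lemma blk_mul (A B : ℕ → ℕ → Matrix (Fin N) (Fin N) k) :
    blk n N A * blk n N B = blk n N (fun r c => ∑ m : Fin n, A r (m : ℕ) * B (m : ℕ) c) := by
  ext ⟨r, a⟩ ⟨c, b⟩
  simp only [blk, Matrix.mul_apply, Fintype.sum_prod_type, Matrix.of_apply]
  rw [Matrix.sum_apply]
  refine Finset.sum_congr rfl fun m _ => ?_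
  rw [Matrix.mul_apply]

lemma blk_congr {A B : ℕ → ℕ → Matrix (Fin N) (Fin N) k}
    (h : ∀ r c, r < n → c < n → A r c = B r c) : blk n N A = blk n N B := by
  ext ⟨r, a⟩ ⟨c, b⟩
  rw [blk_apply, blk_apply, h _ _ r.2 c.2]

lemma sum_one {R : Type*} [AddCommMonoid R] {n : ℕ} (f : Fin n → R) (a : Fin n)
    (h : ∀ m, m ≠ a → f m = 0) : ∑ m, f m = f a :=
  Finset.sum_eq_single a (fun m _ hm => h m hm) (fun h' => absurd (Finset.mem_univ a) h')

lemma sum_two {R : Type*} [AddCommMonoid R] {n : ℕ} (f : Fin n → R) (a b : Fin n) (hab : a ≠ b)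
    (h : ∀ m, m ≠ a → m ≠ b → f m = 0) : ∑ m, f m = f a + f b := by
  have key : ∑ m ∈ ({a, b} : Finset (Fin n)), f m = ∑ m, f m := by
    apply Finset.sum_subset (Finset.subset_univ _)
    intro m _ hm
    simp only [Finset.mem_insert, Finset.mem_singleton, not_or] at hm
    exact h m hm.1 hm.2
  rw [← key, Finset.sum_pair hab]

/-- block entries of `S`. -/
def Sb (i : ℕ) : ℕ → ℕ → Matrix (Fin N) (Fin N) k := fun r c =>
  if r = i ∧ c = i then 0
  else if r = i ∧ c = i + 1 then s i * g i
  else if r = i + 1 ∧ c = i then s i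
  else if r = i + 1 ∧ c = i + 1 then s i * (1 - g (i + 1))
  else if r = c then s i
  else 0

/-- block entries of `G`. -/
def Gb (j : ℕ) : ℕ → ℕ → Matrix (Fin N) (Fin N) k := fun r c =>
  if r = j then
    (if c < j then lam • (g c - 1) else if c = j then lam • g j else g c - 1)
  else if r = c then 1 else 0

lemma S_eq (i : ℕ) : S n N g s i = blk n N (Sb N g s i) := rfl

lemma G_eq (j : ℕ) : G n N g lam j = blk n N (Gb N g lam j) := rfl

variable {N g s lam}

lemma Sb_other {i r : ℕ} (h1 : r ≠ i) (h2 : r ≠ i + 1) (c : ℕ) :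
    Sb N g s i r c = if r = c then s i else 0 := by
  simp [Sb, h1, h2]

lemma Sb_i {i c : ℕ} (h1 : c ≠ i) (h2 : c ≠ i + 1) : Sb N g s i i c = 0 := by
  simp [Sb, h1, h2, Ne.symm h1]

lemma Sb_ii (i : ℕ) : Sb N g s i i i = 0 := by simp [Sb]

lemma Sb_i_i1 (i : ℕ) : Sb N g s i i (i + 1) = s i * g i := by
  have : i ≠ i + 1 := by omega
  simp [Sb, this]

lemma Sb_i1_i (i : ℕ) : Sb N g s i (i + 1) i = s i := by
  have : i + 1 ≠ i := by omega
  simp [Sb, this]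

lemma Sb_i1_i1 (i : ℕ) : Sb N g s i (i + 1) (i + 1) = s i * (1 - g (i + 1)) := by
  have : i + 1 ≠ i := by omega
  simp [Sb, this]

lemma Sb_i1 {i c : ℕ} (h1 : c ≠ i) (h2 : c ≠ i + 1) : Sb N g s i (i + 1) c = 0 := by
  have h3 : i + 1 ≠ i := by omega
  simp [Sb, h1, h2, h3, Ne.symm h2]

lemma Gb_ne {j r : ℕ} (h : r ≠ j) (c : ℕ) :
    Gb N g lam j r c = if r = c then 1 else 0 := by
  simp [Gb, h]

lemma Gb_row_lt {j c : ℕ} (h : c < j) : Gb N g lam j j c = lam • (g c - 1) := by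
  simp [Gb, h]

lemma Gb_row_eq (j : ℕ) : Gb N g lam j j j = lam • g j := by simp [Gb]

lemma Gb_row_gt {j c : ℕ} (h : j < c) : Gb N g lam j j c = g c - 1 := by
  have h1 : ¬ c < j := by omega
  have h2 : c ≠ j := by omega
  simp [Gb, h1, h2]

/-- reduce a sum against the sparse block rows of `S` (from the left). -/
lemma sum_Sb_left {n i : ℕ} (hi : i + 1 < n) (r : ℕ) (hr : r < n)
    (X : Fin n → Matrix (Fin N) (Fin N) k) :
    ∑ m : Fin n, Sb N g s i r (m : ℕ) * X m =
      if r = i then (s i * g i) * X ⟨i + 1, hi⟩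
      else if r = i + 1 then
        s i * X ⟨i, Nat.lt_of_succ_lt hi⟩ + (s i * (1 - g (i + 1))) * X ⟨i + 1, hi⟩
      else s i * X ⟨r, hr⟩ := by
  by_cases hri : r = i
  · subst hri
    rw [if_pos rfl, sum_one _ ⟨r + 1, hi⟩]
    · rw [Sb_i_i1]
    · intro m hm
      have hm' : (m : ℕ) ≠ r + 1 := fun h => hm (Fin.ext h)
      by_cases hmr : (m : ℕ) = r
      · rw [hmr, Sb_ii, zero_mul]
      · rw [Sb_i hmr hm', zero_mul]
  · rw [if_neg hri]
    by_cases hri1 : r = i + 1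
    · subst hri1
      rw [if_pos rfl, sum_two _ ⟨i, by omega⟩ ⟨i + 1, hi⟩ (by simp)]
      · rw [Sb_i1_i, Sb_i1_i1]
      · intro m hm1 hm2
        have hm1' : (m : ℕ) ≠ i := fun h => hm1 (Fin.ext h)
        have hm2' : (m : ℕ) ≠ i + 1 := fun h => hm2 (Fin.ext h)
        rw [Sb_i1 hm1' hm2', zero_mul]
    · rw [if_neg hri1, sum_one _ ⟨r, hr⟩]
      · rw [Sb_other hri hri1, if_pos rfl]
      · intro m hm
        have hm' : r ≠ (m : ℕ) := fun h => hm (Fin.ext h.symm)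
        rw [Sb_other hri hri1, if_neg hm', zero_mul]

/-- reduce a sum against the sparse block columns of `S` (from the right). -/
lemma sum_Sb_right {n i : ℕ} (hi : i + 1 < n) (c : ℕ) (hc : c < n)
    (X : Fin n → Matrix (Fin N) (Fin N) k) :
    ∑ m : Fin n, X m * Sb N g s i (m : ℕ) c =
      if c = i then X ⟨i + 1, hi⟩ * s i
      else if c = i + 1 then
        X ⟨i, Nat.lt_of_succ_lt hi⟩ * (s i * g i) + X ⟨i + 1, hi⟩ * (s i * (1 - g (i + 1)))
      else X ⟨c, hc⟩ * s i := by
  by_cases hci : c = i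
  · subst hci
    rw [if_pos rfl, sum_one _ ⟨c + 1, hi⟩]
    · rw [Sb_i1_i]
    · intro m hm
      have hm' : (m : ℕ) ≠ c + 1 := fun h => hm (Fin.ext h)
      by_cases hmc : (m : ℕ) = c
      · rw [hmc, Sb_ii, mul_zero]
      · rw [Sb_other hmc hm', if_neg hmc, mul_zero]
  · rw [if_neg hci]
    by_cases hci1 : c = i + 1
    · subst hci1
      rw [if_pos rfl, sum_two _ ⟨i, by omega⟩ ⟨i + 1, hi⟩ (by simp)]
      · rw [Sb_i_i1, Sb_i1_i1]
      · intro m hm1 hm2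
        have hm1' : (m : ℕ) ≠ i := fun h => hm1 (Fin.ext h)
        have hm2' : (m : ℕ) ≠ i + 1 := fun h => hm2 (Fin.ext h)
        rw [Sb_other hm1' hm2', if_neg (by omega : ¬ (m : ℕ) = i + 1), mul_zero]
    · rw [if_neg hci1, sum_one _ ⟨c, hc⟩]
      · simp only [Fin.val_mk]
        rw [Sb_other hci hci1, if_pos rfl]
      · intro m hm
        have hm' : (m : ℕ) ≠ c := fun h => hm (Fin.ext h)
        by_cases hmi : (m : ℕ) = i
        · rw [hmi, Sb_i hci hci1, mul_zero]
        · by_cases hmi1 : (m : ℕ) = i + 1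
          · rw [hmi1, Sb_i1 hci hci1, mul_zero]
          · rw [Sb_other hmi hmi1, if_neg hm', mul_zero]

/-- reduce a sum against a diagonal (non-special) block row of `G` (from the left). -/
lemma sum_Gb_ne {n j : ℕ} (r : ℕ) (hr : r < n) (hrj : r ≠ j)
    (X : Fin n → Matrix (Fin N) (Fin N) k) :
    ∑ m : Fin n, Gb N g lam j r (m : ℕ) * X m = X ⟨r, hr⟩ := by
  rw [sum_one _ ⟨r, hr⟩]
  · rw [Gb_ne hrj, if_pos rfl, one_mul]
  · intro m hm
    have hm' : r ≠ (m : ℕ) := fun h => hm (Fin.ext h.symm)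
    rw [Gb_ne hrj, if_neg hm', zero_mul]

end blocks

/-! ### commutation of `S i` with `G j`, `j ∉ {i, i+1}` -/

section comm

variable {n N : ℕ} {g s : ℕ → Matrix (Fin N) (Fin N) k} {lam : k}

lemma S_comm_G {i j : ℕ} (hi : i + 1 < n) (hj : j < n)
    (hj1 : j ≠ i) (hj2 : j ≠ i + 1)
    (h1 : s i * g i = g (i + 1) * s i)
    (h2 : g (i + 1) * s i * g (i + 1) = g i * g (i + 1) * s i)
    (h3 : ∀ c, c < n → c ≠ i → c ≠ i + 1 → s i * g c = g c * s i) :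
    S n N g s i * G n N g lam j = G n N g lam j * S n N g s i := by
  rw [S_eq, G_eq, blk_mul, blk_mul]
  apply blk_congr
  intro r c hr hc
  rw [sum_Sb_left hi r hr, sum_Sb_right hi c hc]
  simp only [Fin.val_mk]
  by_cases hrj : r = j
  · subst hrj
    rw [if_neg hj1, if_neg hj2]
    by_cases hci : c = i
    · subst hci
      rw [if_pos rfl]
      rcases Nat.lt_trichotomy c r with h | h | h
      · rw [Gb_row_lt h, Gb_row_lt (show c + 1 < r by omega), mul_smul_comm, smul_mul_assoc,
          k1 (s c) (g c) (g (c + 1)) h1]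
      · exact absurd h (Ne.symm hj1)
      · rw [Gb_row_gt h, Gb_row_gt (show r < c + 1 by omega)]
        exact k1 (s c) (g c) (g (c + 1)) h1
    · by_cases hci1 : c = i + 1
      · subst hci1
        rw [if_neg hci, if_pos rfl]
        rcases Nat.lt_trichotomy i r with h | h | h
        · rw [Gb_row_lt (show i + 1 < r by omega), Gb_row_lt h, mul_smul_comm,
            smul_mul_assoc, smul_mul_assoc, ← smul_add, k2 (s i) (g i) (g (i + 1)) h1 h2]
        · exact absurd h.symm hj1
        · rw [Gb_row_gt (show r < i + 1 by omega), Gb_row_gt (show r < i by omega)]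
          exact k2 (s i) (g i) (g (i + 1)) h1 h2
      · rw [if_neg hci, if_neg hci1]
        have hsc := h3 c hc hci hci1
        rcases Nat.lt_trichotomy c r with h | h | h
        · rw [Gb_row_lt h, mul_smul_comm, smul_mul_assoc, k1 (s i) (g c) (g c) hsc]
        · subst h
          rw [Gb_row_eq, mul_smul_comm, smul_mul_assoc, hsc]
        · rw [Gb_row_gt h]
          exact k1 (s i) (g c) (g c) hsc
  · by_cases hri : r = i
    · subst hri
      rw [if_pos rfl]
      simp only [Gb_ne (show r + 1 ≠ j from Ne.symm hj2), Gb_ne hrj]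
      split_ifs <;> first | (exfalso; omega) | simp
    · by_cases hri1 : r = i + 1
      · subst hri1
        rw [if_neg (show ¬ i + 1 = i by omega), if_pos rfl]
        simp only [Gb_ne (show i ≠ j from Ne.symm hj1), Gb_ne (show i + 1 ≠ j from Ne.symm hj2)]
        split_ifs <;> first | (exfalso; omega) | simp
      · rw [if_neg hri, if_neg hri1]
        simp only [Gb_ne hrj]
        split_ifs <;> first | (exfalso; omega) | simp

/-! ### the product `G i * G (i+1)` and its commutation with `S i` -/

/-- block entries of `G i * G (i+1)`. -/
def Pb (N : ℕ) (g : ℕ → Matrix (Fin N) (Fin N) k) (lam : k) (i : ℕ) :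
    ℕ → ℕ → Matrix (Fin N) (Fin N) k := fun r c =>
  if r = i then
    (if c < i then lam • (g (i + 1) * (g c - 1))
     else if c = i then lam • (g (i + 1) * g i - g (i + 1) + 1)
     else if c = i + 1 then lam • (g (i + 1) * g (i + 1) - g (i + 1))
     else g (i + 1) * (g c - 1))
  else Gb N g lam (i + 1) r c

lemma Pb_ne {i r : ℕ} (h : r ≠ i) (c : ℕ) :
    Pb N g lam i r c = Gb N g lam (i + 1) r c := by simp [Pb, h]

lemma Pb_lt {i c : ℕ} (h : c < i) :
    Pb N g lam i i c = lam • (g (i + 1) * (g c - 1)) := by simp [Pb, h]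

lemma Pb_ii (i : ℕ) :
    Pb N g lam i i i = lam • (g (i + 1) * g i - g (i + 1) + 1) := by simp [Pb]

lemma Pb_i_i1 (i : ℕ) :
    Pb N g lam i i (i + 1) = lam • (g (i + 1) * g (i + 1) - g (i + 1)) := by
  have h1 : ¬ i + 1 < i := by omega
  have h2 : i + 1 ≠ i := by omega
  simp [Pb, h1, h2]

lemma Pb_i_gt {i c : ℕ} (h : i + 1 < c) :
    Pb N g lam i i c = g (i + 1) * (g c - 1) := by
  have h1 : ¬ c < i := by omega
  have h2 : c ≠ i := by omega
  have h3 : c ≠ i + 1 := by omega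
  simp [Pb, h1, h2, h3]

lemma P2_eq {i : ℕ} (hi : i + 1 < n) :
    G n N g lam i * G n N g lam (i + 1) = blk n N (Pb N g lam i) := by
  rw [G_eq, G_eq, blk_mul]
  apply blk_congr
  intro r c hr hc
  by_cases hri : r = i
  · subst hri
    by_cases hci1 : c = r + 1
    · subst hci1
      rw [sum_one _ ⟨r + 1, hc⟩]
      · simp only [Fin.val_mk]
        rw [Gb_row_gt (Nat.lt_succ_self r), Gb_row_eq, Pb_i_i1, mul_smul_comm]
        congr 1
        noncomm_ring
      · intro m hm
        have hm' : (m : ℕ) ≠ r + 1 := fun h => hm (Fin.ext h)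
        rw [Gb_ne hm', if_neg hm', mul_zero]
    · rw [sum_two _ ⟨c, hc⟩ ⟨r + 1, hi⟩ (Fin.ne_of_val_ne hci1)]
      · simp only [Fin.val_mk]
        rw [Gb_ne hci1, if_pos rfl, mul_one, Gb_row_gt (Nat.lt_succ_self r)]
        rcases Nat.lt_trichotomy c r with h | h | h
        · rw [Gb_row_lt h, Gb_row_lt (show c < r + 1 by omega), Pb_lt h, mul_smul_comm,
            ← smul_add]
          congr 1
          noncomm_ring
        · subst h
          rw [Gb_row_eq, Gb_row_lt (Nat.lt_succ_self _), Pb_ii, mul_smul_comm, ← smul_add]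
          congr 1
          noncomm_ring
        · rw [Gb_row_gt h, Gb_row_gt (show r + 1 < c by omega), Pb_i_gt (show r + 1 < c by omega)]
          noncomm_ring
      · intro m hm1 hm2
        have hm1' : (m : ℕ) ≠ c := fun h => hm1 (Fin.ext h)
        have hm2' : (m : ℕ) ≠ r + 1 := fun h => hm2 (Fin.ext h)
        rw [Gb_ne hm2', if_neg hm1', mul_zero]
  · rw [sum_Gb_ne r hr hri, Pb_ne hri]

lemma S_comm_P2 {i : ℕ} (hi : i + 1 < n)
    (h1 : s i * g i = g (i + 1) * s i)
    (h2 : g (i + 1) * s i * g (i + 1) = g i * g (i + 1) * s i)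
    (h3 : ∀ c, c < n → c ≠ i → c ≠ i + 1 → s i * g c = g c * s i) :
    S n N g s i * blk n N (Pb N g lam i) = blk n N (Pb N g lam i) * S n N g s i := by
  rw [S_eq, blk_mul, blk_mul]
  apply blk_congr
  intro r c hr hc
  rw [sum_Sb_left hi r hr, sum_Sb_right hi c hc]
  simp only [Fin.val_mk]
  by_cases hri : r = i
  · subst hri
    rw [if_pos rfl]
    simp only [Pb_ne (show r + 1 ≠ r by omega)]
    by_cases hci : c = r
    · rw [if_pos hci, hci, Gb_row_lt (Nat.lt_succ_self r), Pb_i_i1, mul_smul_comm,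
        smul_mul_assoc, k4 (s r) (g r) (g (r + 1)) h1]
    · rw [if_neg hci]
      by_cases hci1 : c = r + 1
      · rw [if_pos hci1, hci1, Gb_row_eq, Pb_ii, Pb_i_i1, mul_smul_comm, smul_mul_assoc,
          smul_mul_assoc, ← smul_add, k5 (s r) (g r) (g (r + 1)) h1 h2]
      · rw [if_neg hci1]
        have hsc := h3 c hc hci hci1
        rcases Nat.lt_trichotomy c r with h | h | h
        · rw [Gb_row_lt (show c < r + 1 by omega), Pb_lt h, mul_smul_comm, smul_mul_assoc,
            k3 (s r) (g r) (g (r + 1)) (g c) h1 hsc]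
        · exact absurd h hci
        · rw [Gb_row_gt (show r + 1 < c by omega), Pb_i_gt (show r + 1 < c by omega)]
          exact k3 (s r) (g r) (g (r + 1)) (g c) h1 hsc
  · rw [if_neg hri]
    by_cases hri1 : r = i + 1
    · subst hri1
      rw [if_pos rfl]
      simp only [Pb_ne (show i + 1 ≠ i by omega)]
      by_cases hci : c = i
      · rw [if_pos hci, hci, Pb_ii, Gb_row_lt (Nat.lt_succ_self i), Gb_row_eq]
        simp only [mul_smul_comm, smul_mul_assoc]
        rw [← smul_add, k7 (s i) (g i) (g (i + 1)) h1]
      · rw [if_neg hci]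
        by_cases hci1 : c = i + 1
        · rw [if_pos hci1, hci1, Pb_i_i1, Gb_row_eq, Gb_row_lt (Nat.lt_succ_self i)]
          simp only [mul_smul_comm, smul_mul_assoc]
          rw [← smul_add, ← smul_add]
          exact congrArg (fun X => lam • X) (k8 (s i) (g i) (g (i + 1)) h1 h2)
        · rw [if_neg hci1]
          have hsc := h3 c hc hci hci1
          rcases Nat.lt_trichotomy c i with h | h | h
          · rw [Pb_lt h, Gb_row_lt (show c < i + 1 by omega)]
            simp only [mul_smul_comm, smul_mul_assoc]
            rw [← smul_add, k6 (s i) (g (i + 1)) (g c) hsc]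
          · exact absurd h hci
          · rw [Pb_i_gt (show i + 1 < c by omega), Gb_row_gt (show i + 1 < c by omega)]
            exact k6 (s i) (g (i + 1)) (g c) hsc
    · rw [if_neg hri1]
      simp only [Pb_ne hri, Gb_ne hri1]
      split_ifs <;> first | (exfalso; omega) | simp


lemma S_comm_Gprod {i : ℕ} (hi : i + 1 < n)
    (h1 : s i * g i = g (i + 1) * s i)
    (h2 : g (i + 1) * s i * g (i + 1) = g i * g (i + 1) * s i)
    (h3 : ∀ c, c < n → c ≠ i → c ≠ i + 1 → s i * g c = g c * s i) :
    S n N g s i * Gprod n N g lam = Gprod n N g lam * S n N g s i := by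
  have hmap : ((List.finRange n).map fun j : Fin n => G n N g lam (j : ℕ))
      = (List.range n).map (G n N g lam) := by
    rw [← List.map_coe_finRange_eq_range, List.map_map]
    rfl
  have hsplit : List.range n
      = (List.range i ++ [i, i + 1]) ++ (List.range (n - (i + 2))).map (i + 2 + ·) := by
    have h0 : (i + 2) + (n - (i + 2)) = n := by omega
    calc List.range n = List.range ((i + 2) + (n - (i + 2))) := by rw [h0]
      _ = List.range (i + 2) ++ (List.range (n - (i + 2))).map (i + 2 + ·) :=
          List.range_add
      _ = (List.range i ++ [i, i + 1]) ++ (List.range (n - (i + 2))).map (i + 2 + ·) := by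
          rw [List.range_succ, List.range_succ]
          simp
  have comm1 : Commute (S n N g s i) (((List.range i).map (G n N g lam)).prod) := by
    apply Commute.list_prod_right
    intro x hx
    rcases List.mem_map.1 hx with ⟨j, hj, rfl⟩
    have hj' : j < i := List.mem_range.1 hj
    exact S_comm_G hi (by omega) (by omega) (by omega) h1 h2 h3
  have comm2 : Commute (S n N g s i) (G n N g lam i * G n N g lam (i + 1)) := by
    rw [P2_eq hi]
    exact S_comm_P2 hi h1 h2 h3
  have comm3 : Commute (S n N g s i)
      (((List.range (n - (i + 2))).map ((i + 2 + ·)) |>.map (G n N g lam)).prod) := by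
    apply Commute.list_prod_right
    intro x hx
    rcases List.mem_map.1 hx with ⟨j, hj, rfl⟩
    rcases List.mem_map.1 hj with ⟨t, ht, rfl⟩
    have ht' : t < n - (i + 2) := List.mem_range.1 ht
    exact S_comm_G hi (by omega) (by omega) (by omega) h1 h2 h3
  have hmid : ([i, i + 1].map (G n N g lam)).prod = G n N g lam i * G n N g lam (i + 1) := by
    simp
  have hflat : ∀ l : List (Fin n), (l.flatMap fun a => [(a : ℕ)]) = l.map Fin.val := by
    intro l
    induction l with
    | nil => rfl
    | cons x xs ih =>
      show [(x : ℕ)] ++ xs.flatMap (fun a => [(a : ℕ)]) = (x : ℕ) :: xs.map Fin.val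
      rw [← ih]; rfl
  have hG : Gprod n N g lam = ((List.range n).map (G n N g lam)).prod := by
    unfold Gprod
    show (List.map (fun j : ℕ => G n N g lam j)
      (List.flatMap (α := Fin n) (β := ℕ) (fun a => [a.val]) (List.finRange n))).prod = _
    rw [← List.map_eq_flatMap, List.map_coe_finRange_eq_range]
  rw [hG, hsplit]
  simp only [List.map_append, List.prod_append, hmid]
  exact ((comm1.mul_right comm2).mul_right comm3).eq


end comm

/-- The subspace `L = ker(G_1 ⋯ G_n − 1)` is invariant under each Long–Moody
matrix `S_i`. -/
theorem L_invariant_under_S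
    (N n : ℕ) (hN : 1 ≤ N) (hn : 2 ≤ n)
    (g s : ℕ → Matrix (Fin N) (Fin N) k) (lam : k) (hlam : lam ≠ 0)
    (hgu : ∀ j, j < n → IsUnit (g j))
    (hsu : ∀ i, i + 1 < n → IsUnit (s i))
    (hbr1 : ∀ i, i + 2 < n → s i * s (i + 1) * s i = s (i + 1) * s i * s (i + 1))
    (hbr2 : ∀ i j, i + 1 < n → j + 1 < n → (i + 2 ≤ j ∨ j + 2 ≤ i) →
      s i * s j = s j * s i)
    (ha1 : ∀ i, i + 1 < n → s i * g i = g (i + 1) * s i)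
    (ha2 : ∀ i, i + 1 < n → g (i + 1) * s i * g (i + 1) = g i * g (i + 1) * s i)
    (ha3 : ∀ i j, i + 1 < n → j < n → j ≠ i → j ≠ i + 1 → s i * g j = g j * s i) :
    ∀ x ∈ Lset n N g lam, ∀ i, i + 1 < n →
      (S n N g s i).mulVec x ∈ Lset n N g lam := by
  intro x hx i hi
  have hcomm := S_comm_Gprod (lam := lam) (i := i) hi (ha1 i hi) (ha2 i hi)
    (fun c hc hne1 hne2 => ha3 i c hi hc hne1 hne2)
  simp only [Lset, Set.mem_setOf_eq] at hx ⊢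
  have heq : (Gprod n N g lam - 1) * S n N g s i = S n N g s i * (Gprod n N g lam - 1) := by
    rw [sub_mul, mul_sub, mul_one, one_mul, hcomm]
  rw [Matrix.mulVec_mulVec, heq, ← Matrix.mulVec_mulVec, hx, Matrix.mulVec_zero]



end KLM
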